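/- If the Taylor coefficients c_k of an analytic function f on {|z| < R} (R > 1) satisfy the Cauchy bounds, and α_n = ∫ conj(Φ_n(e^{iθ})) g(e^{iθ}) dμ(θ) where g has an analytic extension to {|z| < R} and Φ_n is orthogonal to all e^{ijθ} with j < n in L²(dμ), then |α_n| ≤ ‖Φ_n‖_{L²(dμ)} · Σ_{k ≥ n} |ĝ(k)| where ĝ(k) are the Taylor coefficients of g; in particular limsup |α_n|^{1/n} ≤ 1/R. -/

import Mathlib

/-!
Expanding `g` in its Taylor series on the unit circle and integrating termwise (the series
converges absolutely there), `α n = ∑ ĝ(k) ⟨Φ_n, e^{ikθ}⟩`. Orthogonality kills the terms with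
`k < n`, and each remaining pairing is bounded by `‖Φ_n‖_{L¹} ≤ ‖Φ_n‖_{L²}`. For `1 < r < R` the
tail `∑_{k ≥ n} |ĝ(k)|` is at most `r⁻ⁿ ∑ |ĝ(k)| rᵏ`, so `limsup |α n|^{1/n} ≤ r⁻¹` for every such
`r`.
-/

open Complex MeasureTheory Filter Topology

theorem integral_norm_le_sqrt_integral_norm_sq {α E : Type*} [MeasurableSpace α]
    [NormedAddCommGroup E] {μ : Measure α} [IsProbabilityMeasure μ] {f : α → E}
    (hf : MemLp f 2 μ) : ∫ x, ‖f x‖ ∂μ ≤ √(∫ x, ‖f x‖ ^ 2 ∂μ) := by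
  have hvar := ProbabilityTheory.variance_nonneg (fun x => ‖f x‖) μ
  rw [ProbabilityTheory.variance_eq_sub hf.norm] at hvar
  rw [← Real.sqrt_sq (integral_nonneg fun _ => norm_nonneg _)]
  exact Real.sqrt_le_sqrt (by simpa using hvar)

theorem norm_mul_pow_le_of_norm_le_one {𝕜 : Type*} [NormedDivisionRing 𝕜] (a : 𝕜) {b : 𝕜}
    (hb : ‖b‖ ≤ 1) (k : ℕ) : ‖a * b ^ k‖ ≤ ‖a‖ := by
  rw [norm_mul, norm_pow]
  exact mul_le_of_le_one_right (norm_nonneg a) (pow_le_one₀ (norm_nonneg b) hb)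

section PowerSeries

variable {α : Type*} [MeasurableSpace α] {μ : Measure α} {φ e G : α → ℂ} {c : ℕ → ℂ}

theorem hasSum_integral_mul_of_hasSum_pow (hφ : Integrable φ μ) (he : AEStronglyMeasurable e μ)
    (he1 : ∀ x, ‖e x‖ ≤ 1) (hc : Summable fun k => ‖c k‖)
    (hG : ∀ x, HasSum (fun k => c k * e x ^ k) (G x)) :
    HasSum (fun k => c k * ∫ x, φ x * e x ^ k ∂μ) (∫ x, φ x * G x ∂μ) := by
  have hmoment : ∀ k, Integrable (fun x => φ x * e x ^ k) μ := fun k =>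
    hφ.mul_bdd (he.pow k) (.of_forall fun x => by
      simpa using norm_mul_pow_le_of_norm_le_one 1 (he1 x) k)
  have hterm : ∀ k, Integrable (fun x => c k * (φ x * e x ^ k)) μ := fun k =>
    (hmoment k).const_mul (c k)
  have hsum : Summable fun k => ∫ x, ‖c k * (φ x * e x ^ k)‖ ∂μ := by
    refine (hc.mul_right (∫ x, ‖φ x‖ ∂μ)).of_nonneg_of_le
      (fun _ => integral_nonneg fun _ => norm_nonneg _) fun k => ?_
    simp only [norm_mul _ (φ _ * _), integral_const_mul]
    exact mul_le_mul_of_nonneg_left (integral_mono (hmoment k).norm hφ.norm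
      fun x => norm_mul_pow_le_of_norm_le_one _ (he1 x) k) (norm_nonneg _)
  have hswap : ∫ x, φ x * G x ∂μ = ∫ x, ∑' k, c k * (φ x * e x ^ k) ∂μ :=
    integral_congr_ae (.of_forall fun x => by
      simpa only [mul_left_comm (φ x)] using ((hG x).mul_left (φ x)).tsum_eq.symm)
  simpa only [hswap, integral_const_mul] using hasSum_integral_of_summable_integral_norm hterm hsum

theorem norm_integral_mul_le_of_moments_eq_zero (hφ : Integrable φ μ)
    (he : AEStronglyMeasurable e μ) (he1 : ∀ x, ‖e x‖ ≤ 1) (hc : Summable fun k => ‖c k‖)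
    (hG : ∀ x, HasSum (fun k => c k * e x ^ k) (G x)) {n : ℕ}
    (hmom : ∀ k < n, ∫ x, φ x * e x ^ k ∂μ = 0) :
    ‖∫ x, φ x * G x ∂μ‖ ≤ (∫ x, ‖φ x‖ ∂μ) * ∑' k, ‖c (n + k)‖ := by
  have htail :
      HasSum (fun k => c (n + k) * ∫ x, φ x * e x ^ (n + k) ∂μ) (∫ x, φ x * G x ∂μ) := by
    have h := (hasSum_nat_add_iff' n).mpr (hasSum_integral_mul_of_hasSum_pow hφ he he1 hc hG)
    rw [Finset.sum_eq_zero fun k hk => by rw [hmom k (Finset.mem_range.mp hk), mul_zero],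
      sub_zero] at h
    simpa only [add_comm _ n] using h
  refine htail.norm_le_of_bounded
    ((hc.comp_injective (add_right_injective n)).hasSum.mul_left (∫ x, ‖φ x‖ ∂μ)) fun k => ?_
  rw [norm_mul, mul_comm]
  exact mul_le_mul_of_nonneg_right (norm_integral_le_of_norm_le hφ.norm
    (.of_forall fun x => norm_mul_pow_le_of_norm_le_one _ (he1 x) _)) (norm_nonneg _)

end PowerSeries

theorem tsum_nat_add_le_tsum_mul_pow_mul_inv_pow {a : ℕ → ℝ} (ha : ∀ k, 0 ≤ a k) {r : ℝ}
    (hr : 1 ≤ r) (hs : Summable fun k => a k * r ^ k) (n : ℕ) :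
    ∑' k, a (n + k) ≤ (∑' k, a k * r ^ k) * r⁻¹ ^ n := by
  have hr0 : 0 < r := one_pos.trans_le hr
  have hshift : Summable fun k => a (n + k) * r ^ (n + k) :=
    hs.comp_injective (add_right_injective n)
  have hle : ∀ k, a (n + k) * r ^ n ≤ a (n + k) * r ^ (n + k) := fun k => by
    gcongr
    exacts [ha _, Nat.le_add_right n k]
  rw [inv_pow, ← div_eq_mul_inv, le_div_iff₀ (pow_pos hr0 n), ← tsum_mul_right]
  calc ∑' k, a (n + k) * r ^ n ≤ ∑' k, a (n + k) * r ^ (n + k) :=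
        Summable.tsum_le_tsum hle
          (hshift.of_nonneg_of_le (fun k => mul_nonneg (ha _) (pow_nonneg hr0.le n)) hle) hshift
    _ ≤ ∑' k, a k * r ^ k :=
        tsum_comp_le_tsum_of_inj hs (fun k => mul_nonneg (ha k) (pow_nonneg hr0.le k))
          (add_right_injective n)

theorem limsup_rpow_inv_le_of_le_mul_pow {u : ℕ → ℝ} (hu : ∀ n, 0 ≤ u n) {C q : ℝ} (hq : 0 ≤ q)
    (h : ∀ n, u n ≤ C * q ^ n) : limsup (fun n : ℕ => u n ^ (n : ℝ)⁻¹) atTop ≤ q := by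
  -- `C` itself may be `0`, and then `C ^ (1 / n)` does not tend to `1`.
  set C' := max C 1
  have hC' : 0 < C' := one_pos.trans_le (le_max_right _ _)
  have hlim : Tendsto (fun n : ℕ => C' ^ (n : ℝ)⁻¹ * q) atTop (𝓝 q) := by
    simpa using ((Real.continuousAt_const_rpow hC'.ne').tendsto.comp
      tendsto_inv_atTop_nhds_zero_nat).mul_const q
  have hle : ∀ᶠ n : ℕ in atTop, u n ^ (n : ℝ)⁻¹ ≤ C' ^ (n : ℝ)⁻¹ * q := by
    filter_upwards [eventually_ne_atTop 0] with n hn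
    calc u n ^ (n : ℝ)⁻¹ ≤ (C' * q ^ n) ^ (n : ℝ)⁻¹ :=
          Real.rpow_le_rpow (hu n) ((h n).trans (by gcongr; exact le_max_left _ _)) (by positivity)
      _ = C' ^ (n : ℝ)⁻¹ * q := by
          rw [Real.mul_rpow hC'.le (by positivity), Real.pow_rpow_inv_natCast hq hn]
  calc limsup (fun n : ℕ => u n ^ (n : ℝ)⁻¹) atTop
      ≤ limsup (fun n : ℕ => C' ^ (n : ℝ)⁻¹ * q) atTop :=
        limsup_le_limsup hle (isCoboundedUnder_le_of_le atTop fun n => Real.rpow_nonneg (hu n) _)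
          hlim.isBoundedUnder_le
    _ = q := hlim.limsup_eq

theorem limsup_rpow_inv_le_inv_of_eventually_le_mul_inv_pow {u : ℕ → ℝ} (hu : ∀ n, 0 ≤ u n)
    {R : ℝ} (hR : 0 < R) (h : ∀ᶠ r in 𝓝[<] R, ∃ C, ∀ n, u n ≤ C * r⁻¹ ^ n) :
    limsup (fun n : ℕ => u n ^ (n : ℝ)⁻¹) atTop ≤ R⁻¹ := by
  refine le_of_forall_gt_imp_ge_of_dense fun q hq => ?_
  have hq0 : 0 < q := (inv_pos.mpr hR).trans hq
  obtain ⟨r, ⟨C, hC⟩, hqr, -⟩ := (h.and (Ioo_mem_nhdsLT (inv_lt_of_inv_lt₀ hR hq))).exists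
  have hr0 : 0 < r := (inv_pos.mpr hq0).trans hqr
  exact (limsup_rpow_inv_le_of_le_mul_pow hu (inv_nonneg.mpr hr0.le) hC).trans
    (inv_lt_of_inv_lt₀ hq0 hqr).le

theorem taylor_tail_bound_verblunsky_general
    (R : ℝ) (hR : 1 < R)
    (μ : Measure ℝ) [IsProbabilityMeasure μ]
    (Φ : ℕ → ℂ → ℂ)
    (hL2 : ∀ n, MemLp (fun θ : ℝ => Φ n (Complex.exp (θ * Complex.I))) 2 μ)
    (horth : ∀ n : ℕ, ∀ k : ℕ, k < n →
      ∫ θ : ℝ, (starRingEnd ℂ) (Φ n (Complex.exp (θ * Complex.I))) *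
        Complex.exp (θ * Complex.I) ^ k ∂μ = 0)
    (hnorm : ∀ n : ℕ, ∫ θ : ℝ, ‖Φ n (Complex.exp (θ * Complex.I))‖ ^ 2 ∂μ ≤ 1)
    (gc : ℕ → ℂ)
    (hsum : Summable fun k => ‖gc k‖)
    (hrad : ∀ r : ℝ, 0 ≤ r → r < R → Summable fun k => ‖gc k‖ * r ^ k)
    (g : ℂ → ℂ)
    (hg : ∀ θ : ℝ, HasSum (fun k : ℕ => gc k * Complex.exp (θ * Complex.I) ^ k)
      (g (Complex.exp (θ * Complex.I))))
    (α : ℕ → ℂ)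
    (hα : ∀ n : ℕ, α n = ∫ θ : ℝ,
      (starRingEnd ℂ) (Φ n (Complex.exp (θ * Complex.I))) *
        g (Complex.exp (θ * Complex.I)) ∂μ) :
    (∀ n : ℕ, ‖α n‖ ≤
      Real.sqrt (∫ θ : ℝ, ‖Φ n (Complex.exp (θ * Complex.I))‖ ^ 2 ∂μ) *
        ∑' k : ℕ, ‖gc (n + k)‖) ∧
    Filter.limsup (fun n : ℕ => ‖α n‖ ^ ((n : ℝ)⁻¹)) atTop ≤ R⁻¹ := by
  have hcoeff : ∀ n : ℕ, ‖α n‖ ≤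
      √(∫ θ : ℝ, ‖Φ n (exp (θ * I))‖ ^ 2 ∂μ) * ∑' k : ℕ, ‖gc (n + k)‖ := fun n => by
    have hφ : MemLp (fun θ : ℝ => (starRingEnd ℂ) (Φ n (exp (θ * I)))) 2 μ := (hL2 n).star
    rw [hα n]
    calc _ ≤ (∫ θ, ‖(starRingEnd ℂ) (Φ n (exp (θ * I)))‖ ∂μ) * ∑' k, ‖gc (n + k)‖ :=
          norm_integral_mul_le_of_moments_eq_zero (hφ.integrable one_le_two)
            (by fun_prop : Continuous fun θ : ℝ => exp (θ * I)).aestronglyMeasurable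
            (fun θ => (norm_exp_ofReal_mul_I θ).le) hsum hg (horth n)
      _ ≤ _ := by
          gcongr
          simpa only [Complex.norm_conj] using integral_norm_le_sqrt_integral_norm_sq hφ
  refine ⟨hcoeff, limsup_rpow_inv_le_inv_of_eventually_le_mul_inv_pow (fun n => norm_nonneg _)
    (by linarith) ?_⟩
  filter_upwards [Ioo_mem_nhdsLT hR] with r ⟨hr1, hrR⟩
  refine ⟨∑' k, ‖gc k‖ * r ^ k, fun n => (hcoeff n).trans ?_⟩
  calc _ ≤ 1 * ∑' k, ‖gc (n + k)‖ := by
        gcongr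
        exact Real.sqrt_le_one.mpr (hnorm n)
    _ ≤ _ := (one_mul _).trans_le <| tsum_nat_add_le_tsum_mul_pow_mul_inv_pow
        (fun k => norm_nonneg _) hr1.le (hrad r (by linarith) hrR) n

/-- If Φ_n is orthogonal in L²(dμ) to e^{ijθ} for j < n, with
‖Φ_n‖_{L²(dμ)} ≤ 1, and g(z) = Σ gc(k) z^k is analytic on {|z| < R} (R > 1), then
α_n = ∫ conj(Φ_n(e^{iθ})) g(e^{iθ}) dμ satisfies
|α_n| ≤ ‖Φ_n‖_{L²(dμ)} Σ_{k≥n} |gc(k)|; in particular limsup |α_n|^{1/n} ≤ 1/R. -/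
theorem taylor_tail_bound_verblunsky
    (R : ℝ) (hR : 1 < R)
    (μ : Measure ℝ) [IsProbabilityMeasure μ]
    (Φ : ℕ → ℂ → ℂ)
    (hmeas : ∀ n, Measurable fun θ : ℝ => Φ n (Complex.exp (θ * Complex.I)))
    (hL2 : ∀ n, MemLp (fun θ : ℝ => Φ n (Complex.exp (θ * Complex.I))) 2 μ)
    (horth : ∀ n : ℕ, ∀ k : ℕ, k < n →
      ∫ θ : ℝ, (starRingEnd ℂ) (Φ n (Complex.exp (θ * Complex.I))) *
        Complex.exp (θ * Complex.I) ^ k ∂μ = 0)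
    (hnorm : ∀ n : ℕ, ∫ θ : ℝ, ‖Φ n (Complex.exp (θ * Complex.I))‖ ^ 2 ∂μ ≤ 1)
    (gc : ℕ → ℂ)
    (hsum : Summable fun k => ‖gc k‖)
    (hrad : ∀ r : ℝ, 0 ≤ r → r < R → Summable fun k => ‖gc k‖ * r ^ k)
    (g : ℂ → ℂ)
    (hg : ∀ θ : ℝ, HasSum (fun k : ℕ => gc k * Complex.exp (θ * Complex.I) ^ k)
      (g (Complex.exp (θ * Complex.I))))
    (hgint : ∀ n, Integrable (fun θ : ℝ =>
      (starRingEnd ℂ) (Φ n (Complex.exp (θ * Complex.I))) *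
        g (Complex.exp (θ * Complex.I))) μ)
    (α : ℕ → ℂ)
    (hα : ∀ n : ℕ, α n = ∫ θ : ℝ,
      (starRingEnd ℂ) (Φ n (Complex.exp (θ * Complex.I))) *
        g (Complex.exp (θ * Complex.I)) ∂μ) :
    (∀ n : ℕ, ‖α n‖ ≤
      Real.sqrt (∫ θ : ℝ, ‖Φ n (Complex.exp (θ * Complex.I))‖ ^ 2 ∂μ) *
        ∑' k : ℕ, ‖gc (n + k)‖) ∧
    Filter.limsup (fun n : ℕ => ‖α n‖ ^ ((n : ℝ)⁻¹)) atTop ≤ R⁻¹ :=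
  taylor_tail_bound_verblunsky_general R hR μ Φ hL2 horth hnorm gc hsum hrad g hg α hα
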